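/- If S and S' are orthohedral sets with rk(S) = rk(S') > rk(S ∩ S'), then h(S ∪ S') = h(S) + h(S'). -/

import Mathlib

open Pointwise

namespace PeiPaper

/-- Points of the face of the standard orthant spanned by the canonical basis vectors in `Y`. -/
def stdFace (N : ℕ) (Y : Finset (Fin N)) : Set (Fin N → ℤ) :=
  {v | (∀ i, 0 ≤ v i) ∧ ∀ i, i ∉ Y → v i = 0}

/-- Integral orthogonal matrix. -/
def IsOrthMat {N : ℕ} (A : Matrix (Fin N) (Fin N) ℤ) : Prop :=
  A * A.transpose = 1

/-- `L` is an integral orthant of rank `k` in `ℤ^N`: an affine-orthogonal image of a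
rank-`k` face of the standard orthant. -/
def IsOrthantOfRank {N : ℕ} (L : Set (Fin N → ℤ)) (k : ℕ) : Prop :=
  ∃ (a : Fin N → ℤ) (A : Matrix (Fin N) (Fin N) ℤ) (Y : Finset (Fin N)),
    IsOrthMat A ∧ Y.card = k ∧ L = (fun v => a + A.mulVec v) '' stdFace N Y

def IsOrthant {N : ℕ} (L : Set (Fin N → ℤ)) : Prop := ∃ k, IsOrthantOfRank L k

/-- `S` is orthohedral: a finite union of integral orthants. -/
def IsOrthohedral {N : ℕ} (S : Set (Fin N → ℤ)) : Prop :=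
  ∃ 𝓛 : Set (Set (Fin N → ℤ)), 𝓛.Finite ∧ (∀ L ∈ 𝓛, IsOrthant L) ∧ S = ⋃₀ 𝓛

/-- The rank of a set: the maximal rank of an orthant contained in it. -/
noncomputable def orthRank {N : ℕ} (S : Set (Fin N → ℤ)) : ℕ :=
  sSup {k | ∃ L, IsOrthantOfRank L k ∧ L ⊆ S}

/-- Commensurability: the intersection is nonempty and has the same rank as both sets. -/
def Commensurable {N : ℕ} (L L' : Set (Fin N → ℤ)) : Prop :=
  (L ∩ L').Nonempty ∧ orthRank L = orthRank (L ∩ L') ∧ orthRank L' = orthRank (L ∩ L')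

/-- The rank-`k` orthants contained in `S`. -/
def germSet {N : ℕ} (S : Set (Fin N → ℤ)) (k : ℕ) : Set (Set (Fin N → ℤ)) :=
  {L | IsOrthantOfRank L k ∧ L ⊆ S}

/-- The rank-`k` germs of `S`: commensurability classes of rank-`k` orthants of `S`. -/
def Germ {N : ℕ} (S : Set (Fin N → ℤ)) (k : ℕ) : Type _ :=
  Quot (fun L L' : germSet S k => Commensurable L.1 L'.1)

def germOf {N : ℕ} (S : Set (Fin N → ℤ)) (k : ℕ) (L : germSet S k) : Germ S k :=
  Quot.mk _ L

/-- The number of rank-`k` germs of `S` (as a natural number; `0` if infinite). -/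
noncomputable def heightAt {N : ℕ} (S : Set (Fin N → ℤ)) (k : ℕ) : ℕ :=
  Nat.card (Germ S k)

/-- The height of an orthohedral set: the number of germs of maximal rank. -/
noncomputable def height {N : ℕ} (S : Set (Fin N → ℤ)) : ℕ :=
  heightAt S (orthRank S)

/-- `f` is (the restriction of) an isometry of `ℤ^N` on `L`. -/
def IsometricOn {N : ℕ} (f : (Fin N → ℤ) → (Fin N → ℤ)) (L : Set (Fin N → ℤ)) : Prop :=
  ∃ (a : Fin N → ℤ) (A : Matrix (Fin N) (Fin N) ℤ),
    IsOrthMat A ∧ ∀ x ∈ L, f x = a + A.mulVec x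

/-- `f` is (the restriction of) a translation on `L`. -/
def TranslationOn {N : ℕ} (f : (Fin N → ℤ) → (Fin N → ℤ)) (L : Set (Fin N → ℤ)) : Prop :=
  ∃ a : Fin N → ℤ, ∀ x ∈ L, f x = a + x

/-- `f` is a piecewise-Euclidean-isometric map on `S`. -/
def IsPeiMapOn {N : ℕ} (S : Set (Fin N → ℤ)) (f : (Fin N → ℤ) → (Fin N → ℤ)) : Prop :=
  ∃ 𝓛 : Set (Set (Fin N → ℤ)), 𝓛.Finite ∧ (∀ L ∈ 𝓛, IsOrthant L) ∧
    S = ⋃₀ 𝓛 ∧ 𝓛.PairwiseDisjoint id ∧ ∀ L ∈ 𝓛, IsometricOn f L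

/-- `f` is a piecewise-Euclidean-translation map on `S`. -/
def IsPetMapOn {N : ℕ} (S : Set (Fin N → ℤ)) (f : (Fin N → ℤ) → (Fin N → ℤ)) : Prop :=
  ∃ 𝓛 : Set (Set (Fin N → ℤ)), 𝓛.Finite ∧ (∀ L ∈ 𝓛, IsOrthant L) ∧
    S = ⋃₀ 𝓛 ∧ 𝓛.PairwiseDisjoint id ∧ ∀ L ∈ 𝓛, TranslationOn f L

def IsPeiIso {N : ℕ} (S S' : Set (Fin N → ℤ)) (f : (Fin N → ℤ) → (Fin N → ℤ)) : Prop :=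
  IsPeiMapOn S f ∧ Set.InjOn f S ∧ f '' S = S'

def PeiIsomorphic {N : ℕ} (S S' : Set (Fin N → ℤ)) : Prop := ∃ f, IsPeiIso S S' f

def IsPetIso {N : ℕ} (S S' : Set (Fin N → ℤ)) (f : (Fin N → ℤ) → (Fin N → ℤ)) : Prop :=
  IsPetMapOn S f ∧ Set.InjOn f S ∧ f '' S = S'

def PetIsomorphic {N : ℕ} (S S' : Set (Fin N → ℤ)) : Prop := ∃ f, IsPetIso S S' f

/-- A pei-permutation of `S`: a permutation of `ℤ^N` supported on `S` which is pei on `S`. -/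
def IsPeiPerm {N : ℕ} (S : Set (Fin N → ℤ)) (g : Equiv.Perm (Fin N → ℤ)) : Prop :=
  IsPeiMapOn S ⇑g ∧ ∀ x ∉ S, g x = x

/-- The element `g` has rank at most `k`: it is supported on an orthohedral set of rank `≤ k`. -/
def rankLE {N : ℕ} (g : Equiv.Perm (Fin N → ℤ)) (k : ℕ) : Prop :=
  ∃ T : Set (Fin N → ℤ), IsOrthohedral T ∧ orthRank T ≤ k ∧ ∀ x ∉ T, g x = x

/-- `g` fixes every rank-`k` germ of `S`. -/
def FixesGerm {N : ℕ} (S : Set (Fin N → ℤ)) (k : ℕ) (g : Equiv.Perm (Fin N → ℤ)) : Prop :=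
  ∀ L, IsOrthantOfRank L k → L ⊆ S →
    ∃ L', IsOrthantOfRank L' k ∧ L' ⊆ L ∧ Commensurable L L' ∧
      IsometricOn (⇑g) L' ∧ Commensurable (⇑g '' L') L

/-- `g` fixes every rank-`k` germ of `S` and acts on its tangent coset by a translation. -/
def TranslatesGerm {N : ℕ} (S : Set (Fin N → ℤ)) (k : ℕ) (g : Equiv.Perm (Fin N → ℤ)) : Prop :=
  ∀ L, IsOrthantOfRank L k → L ⊆ S →
    ∃ L' a, IsOrthantOfRank L' k ∧ L' ⊆ L ∧ Commensurable L L' ∧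
      (∀ x ∈ L', g x = a + x) ∧ Commensurable (⇑g '' L') L

/-- `σ` is the map induced by `g` on the rank-`k` germs of `S`. -/
def InducesGermMap {N : ℕ} (S : Set (Fin N → ℤ)) (k : ℕ) (g : Equiv.Perm (Fin N → ℤ))
    (σ : Germ S k → Germ S k) : Prop :=
  ∀ L : germSet S k, ∃ (L'' : Set (Fin N → ℤ)) (M : germSet S k),
    IsOrthantOfRank L'' k ∧ L'' ⊆ L.1 ∧ Commensurable L.1 L'' ∧
    M.1 = ⇑g '' L'' ∧ σ (germOf S k L) = germOf S k M

/-- A finitary permutation which is even (has sign `1` on a finite invariant subset). -/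
def IsEvenFinitary {α : Type*} (σ : Equiv.Perm α) : Prop :=
  ∃ (F : Finset α) (σF : Equiv.Perm F),
    (∀ a ∉ F, σ a = a) ∧ (∀ a : F, σ (a : α) = (σF a : α)) ∧
    @Equiv.Perm.sign F (Classical.decEq _) inferInstance σF = 1

/-- `g` induces an even finitary permutation on the rank-`k` germs of `S`. -/
def IsEvenOnGerms {N : ℕ} (S : Set (Fin N → ℤ)) (k : ℕ) (g : Equiv.Perm (Fin N → ℤ)) : Prop :=
  ∃ σ : Equiv.Perm (Germ S k), InducesGermMap S k g ⇑σ ∧ IsEvenFinitary σ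

/-- Ordering of germs (of arbitrary ranks): `p ≤ q` if they have representatives `L ⊆ L'`. -/
def germLE {N : ℕ} (S : Set (Fin N → ℤ)) (p q : Σ k, Germ S k) : Prop :=
  ∃ (L : germSet S p.1) (L' : germSet S q.1),
    germOf S p.1 L = p.2 ∧ germOf S q.1 L' = q.2 ∧ L.1 ⊆ L'.1

/-- A maximal germ of `S`. -/
def IsMaxGerm {N : ℕ} (S : Set (Fin N → ℤ)) (p : Σ k, Germ S k) : Prop :=
  ∀ q, germLE S p q → germLE S q p

/-- A `0`-based orthant. -/
def IsBasedOrthant {N : ℕ} (L0 : Set (Fin N → ℤ)) : Prop :=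
  ∃ (A : Matrix (Fin N) (Fin N) ℤ) (Y : Finset (Fin N)),
    IsOrthMat A ∧ L0 = (fun v => A.mulVec v) '' stdFace N Y

/-- Two (oriented) parallel orthants. -/
def ParallelOrthants {N : ℕ} (L L' : Set (Fin N → ℤ)) : Prop :=
  ∃ a : Fin N → ℤ, L' = a +ᵥ L

/-- The indicator image `S_τ` of `S`: the union of the `0`-based parallel translates of
the orthants contained in `S`. -/
def indicatorImage {N : ℕ} (S : Set (Fin N → ℤ)) : Set (Fin N → ℤ) :=
  ⋃₀ {L0 | IsBasedOrthant L0 ∧ ∃ a : Fin N → ℤ, (a +ᵥ L0) ⊆ S}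

/-- The height function `h_S`: the number of maximal germs of `S` whose indicator is `L0`. -/
noncomputable def hFun {N : ℕ} (S : Set (Fin N → ℤ)) (L0 : Set (Fin N → ℤ)) : ℕ :=
  Nat.card {p : Σ k, Germ S k //
    IsMaxGerm S p ∧ ∃ L : germSet S p.1, germOf S p.1 L = p.2 ∧ ∃ a : Fin N → ℤ, L.1 = a +ᵥ L0}

/-- `S` is quasi-normal: the maximal based orthants of `S_τ` are exactly the support of `h_S`. -/
def QuasiNormal {N : ℕ} (S : Set (Fin N → ℤ)) : Prop :=
  ∀ L0 : Set (Fin N → ℤ),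
    (IsBasedOrthant L0 ∧ L0 ⊆ indicatorImage S ∧
      ∀ L1, IsBasedOrthant L1 → L1 ⊆ indicatorImage S → L0 ⊆ L1 → L1 ⊆ L0)
    ↔ (IsBasedOrthant L0 ∧ 0 < hFun S L0)

/-- The germ `q` of `S'` is the image of the germ `p` of `S` under the injective pei-map `f`. -/
def GermMapsTo {N : ℕ} (f : (Fin N → ℤ) → (Fin N → ℤ)) (S S' : Set (Fin N → ℤ))
    (p : Σ k, Germ S k) (q : Σ k, Germ S' k) : Prop :=
  p.1 = q.1 ∧ ∃ (L : germSet S p.1) (L'' : Set (Fin N → ℤ)) (M : germSet S' q.1),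
    germOf S p.1 L = p.2 ∧ IsOrthantOfRank L'' p.1 ∧ L'' ⊆ L.1 ∧ Commensurable L.1 L'' ∧
    M.1 = f '' L'' ∧ germOf S' q.1 M = q.2

/-- A stack of `h` parallel rank-`n` orthants. -/
def IsStack {N : ℕ} (S : Set (Fin N → ℤ)) (n h : ℕ) : Prop :=
  ∃ (L0 : Set (Fin N → ℤ)) (a : Fin h → (Fin N → ℤ)),
    IsOrthantOfRank L0 n ∧
    (Pairwise fun i j => Disjoint (a i +ᵥ L0) (a j +ᵥ L0)) ∧
    S = ⋃ i, a i +ᵥ L0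

/-- A coordinate half-space of `ℤ^N`. -/
def IsHalfSpace {N : ℕ} (H : Set (Fin N → ℤ)) : Prop :=
  ∃ (i : Fin N) (c : ℤ), H = {x | x i ≤ c} ∨ H = {x | c ≤ x i}

/-- The canonical embedding `ℤ^N → ℤ^{N+1}`. -/
def emb (N : ℕ) (x : Fin N → ℤ) : Fin (N + 1) → ℤ :=
  fun i => if h : (i : ℕ) < N then x ⟨i, h⟩ else 0

/-- The sum of all matrix entries of a finitely supported family of vectors. -/
noncomputable def totalSum (k : ℕ) (Γ : Type*) : (Γ →₀ (Fin k → ℤ)) →+ ℤ :=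
  Finsupp.liftAddHom (fun _ => ∑ i : Fin k, Pi.evalAddMonoidHom (fun _ => ℤ) i)

/-- The clique (flag) complex of a graph. -/
def cliqueComplex {V : Type*} (G : SimpleGraph V) : Set (Finset V) :=
  {s | s.Nonempty ∧ G.IsClique (s : Set V)}

/-- The geometric realization of a simplicial complex on vertex set `V`. -/
def realization {V : Type*} (K : Set (Finset V)) : Set (V → ℝ) :=
  {f | (∀ v, 0 ≤ f v) ∧ ∃ s ∈ K, Function.support f ⊆ ↑s ∧ ∑ v ∈ s, f v = 1}

/-- A wedge (bouquet) of `n`-spheres indexed by `ι`, with basepoint `b`. -/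
noncomputable def wedgeSpheres (ι : Type) (n : ℕ)
    (b : Metric.sphere (0 : EuclideanSpace ℝ (Fin (n + 1))) 1) : Type :=
  Quot (fun p q : Unit ⊕ (ι × Metric.sphere (0 : EuclideanSpace ℝ (Fin (n + 1))) 1) =>
    (Sum.elim (fun _ => True) (fun pr => pr.2 = b) p) ∧
    (Sum.elim (fun _ => True) (fun qr => qr.2 = b) q))

noncomputable instance (ι : Type) (n : ℕ) (b : Metric.sphere (0 : EuclideanSpace ℝ (Fin (n + 1))) 1) :
    TopologicalSpace (wedgeSpheres ι n b) :=
  letI : TopologicalSpace ι := ⊥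
  instTopologicalSpaceQuot

/-!
Integral orthogonal matrices are signed permutation matrices, so every orthant is a coordinate
orthant `{x | ε i * (x i - a i) ≥ 0 for i ∈ Y, x i = a i for i ∉ Y}`. Pushing the apex `a` far
enough into such an orthant `L` (along the directions `ε i`, `i ∈ Y`), the translate becomes
either contained in or disjoint from any given orthant `P`: for the far points, membership in `P`
no longer depends on the point. By induction on a finite cover, a rank-`k` orthant inside a finite
union of orthants therefore has a rank-`k` sub-orthant inside one of them.

Applied to `S ∪ S'` with `n = rk S = rk S'`, every rank-`n` germ of `S ∪ S'` is a germ of `S` or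
of `S'`. It cannot be both: two commensurable rank-`n` orthants share a rank-`n` sub-orthant, which
would lie in `S ∩ S'`, of rank `< n`. So the rank-`n` germs of `S ∪ S'` are the disjoint union of
those of `S` and of `S'`, and there are finitely many of each.
-/

section

variable {N : ℕ}

lemma exists_eq_one_or_neg_one_of_sum_mul_self_eq_one {ι : Type*} [Fintype ι] [DecidableEq ι]
    {v : ι → ℤ} (h : ∑ j, v j * v j = 1) :
    ∃ j₀, (v j₀ = 1 ∨ v j₀ = -1) ∧ ∀ j ≠ j₀, v j = 0 := by
  obtain ⟨j₀, hj₀⟩ : ∃ j, v j ≠ 0 := by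
    by_contra! h0
    simp [h0] at h
  have hnonneg : ∀ j ∈ Finset.univ.erase j₀, 0 ≤ v j * v j := fun j _ => mul_self_nonneg _
  have hsplit := Finset.add_sum_erase Finset.univ (fun j => v j * v j) (Finset.mem_univ j₀)
  have hpos : 0 < v j₀ * v j₀ := mul_self_pos.2 hj₀
  have hrest : ∑ j ∈ Finset.univ.erase j₀, v j * v j = 0 := by
    linarith [Finset.sum_nonneg hnonneg]
  refine ⟨j₀, mul_self_eq_one_iff.1 (by linarith), fun j hj => mul_self_eq_zero.1 ?_⟩
  exact (Finset.sum_eq_zero_iff_of_nonneg hnonneg).1 hrest j (Finset.mem_erase.2 ⟨hj, by simp⟩)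

def IsSignVector (ε : Fin N → ℤ) : Prop := ∀ i, ε i = 1 ∨ ε i = -1

lemma IsSignVector.mul_self {ε : Fin N → ℤ} (hε : IsSignVector ε) (i : Fin N) :
    ε i * ε i = 1 :=
  mul_self_eq_one_iff.2 (hε i)

lemma IsOrthMat.exists_signedPerm {A : Matrix (Fin N) (Fin N) ℤ} (hA : IsOrthMat A) :
    ∃ (p : Equiv.Perm (Fin N)) (ε : Fin N → ℤ), IsSignVector ε ∧
      ∀ v i, A.mulVec v i = ε i * v (p i) := by
  have hrow : ∀ i i', ∑ j, A i j * A i' j = (1 : Matrix (Fin N) (Fin N) ℤ) i i' := fun i i' => by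
    simpa [Matrix.mul_apply] using congrFun (congrFun hA i) i'
  choose p hp hp0 using fun i =>
    exists_eq_one_or_neg_one_of_sum_mul_self_eq_one (v := A i) (by simpa using hrow i i)
  have hsum : ∀ i (w : Fin N → ℤ), ∑ j, A i j * w j = A i (p i) * w (p i) := fun i w =>
    Finset.sum_eq_single (p i) (fun j _ hj => by rw [hp0 i j hj, zero_mul]) (by simp)
  have hinj : Function.Injective p := by
    intro i i' he
    by_contra hne
    have h0 := hrow i i'
    rw [hsum, Matrix.one_apply_ne hne, he] at h0
    rcases hp i with h | h <;> rcases hp i' with h' | h' <;> rw [he] at h <;> simp [h, h'] at h0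
  exact ⟨Equiv.ofBijective p hinj.bijective_of_finite, fun i => A i (p i), hp,
    fun v i => hsum i v⟩

def signedOrthant (a : Fin N → ℤ) (Y : Finset (Fin N)) (ε : Fin N → ℤ) : Set (Fin N → ℤ) :=
  {x | (∀ i ∈ Y, 0 ≤ ε i * (x i - a i)) ∧ ∀ i ∉ Y, x i = a i}

lemma self_mem_signedOrthant (a : Fin N → ℤ) (Y : Finset (Fin N)) (ε : Fin N → ℤ) :
    a ∈ signedOrthant a Y ε :=
  ⟨fun i _ => by simp, fun _ _ => rfl⟩

lemma image_stdFace_eq_signedOrthant {ε : Fin N → ℤ} (hε : IsSignVector ε) (a : Fin N → ℤ)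
    {f : (Fin N → ℤ) → Fin N → ℤ} {p : Equiv.Perm (Fin N)} (hf : ∀ v i, f v i = ε i * v (p i))
    {Y Y' : Finset (Fin N)} (hY : ∀ i, i ∈ Y' ↔ p i ∈ Y) :
    (fun v => a + f v) '' stdFace N Y = signedOrthant a Y' ε := by
  ext x
  constructor
  · rintro ⟨v, ⟨hv0, hvY⟩, rfl⟩
    have hx : ∀ i, ε i * ((a + f v) i - a i) = v (p i) := fun i => by
      rw [Pi.add_apply, hf, add_sub_cancel_left, ← mul_assoc, hε.mul_self, one_mul]
    refine ⟨fun i _ => (hx i).symm ▸ hv0 _, fun i hi => ?_⟩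
    show a i + f v i = a i
    rw [hf, hvY _ ((hY i).not.1 hi), mul_zero, add_zero]
  · rintro ⟨hxY, hxoff⟩
    have hoff : ∀ j, p.symm j ∉ Y' → ε (p.symm j) * (x (p.symm j) - a (p.symm j)) = 0 :=
      fun j hj => by rw [hxoff _ hj, sub_self, mul_zero]
    refine ⟨fun j => ε (p.symm j) * (x (p.symm j) - a (p.symm j)), ⟨fun j => ?_, fun j hj => ?_⟩, ?_⟩
    · by_cases h : p.symm j ∈ Y'
      · exact hxY _ h
      · exact (hoff j h).ge
    · exact hoff j (by rwa [hY, Equiv.apply_symm_apply])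
    · funext i
      simp only [Pi.add_apply, hf, Equiv.symm_apply_apply]
      rw [← mul_assoc, hε.mul_self, one_mul, add_sub_cancel]

lemma isOrthantOfRank_iff {L : Set (Fin N → ℤ)} {k : ℕ} :
    IsOrthantOfRank L k ↔
      ∃ a Y ε, IsSignVector ε ∧ Y.card = k ∧ L = signedOrthant a Y ε := by
  constructor
  · rintro ⟨a, A, Y, hA, rfl, rfl⟩
    obtain ⟨p, ε, hε, hp⟩ := hA.exists_signedPerm
    exact ⟨a, Y.map p.symm.toEmbedding, ε, hε, Finset.card_map _,
      image_stdFace_eq_signedOrthant hε a hp fun i => by simp [Finset.mem_map_equiv]⟩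
  · rintro ⟨a, Y, ε, hε, rfl, rfl⟩
    refine ⟨a, Matrix.diagonal ε, Y, ?_, rfl,
      (image_stdFace_eq_signedOrthant (p := Equiv.refl _) hε a
        (fun v i => Matrix.mulVec_diagonal ε v i) fun _ => Iff.rfl).symm⟩
    rw [IsOrthMat, Matrix.diagonal_transpose, Matrix.diagonal_mul_diagonal, ← Matrix.diagonal_one]
    exact congrArg Matrix.diagonal (funext hε.mul_self)

lemma exists_nonneg_forall_lt (f : Fin N → ℤ) : ∃ t, 0 ≤ t ∧ ∀ i, f i < t := by
  obtain ⟨M, hM⟩ := Finite.exists_le f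
  exact ⟨max M 0 + 1, by positivity, fun i => by have := hM i; have := le_max_left M 0; omega⟩

def apexShift (a : Fin N → ℤ) (Y : Finset (Fin N)) (ε : Fin N → ℤ) (t : ℤ) : Fin N → ℤ :=
  fun i => if i ∈ Y then a i + ε i * t else a i

lemma mem_signedOrthant_apexShift {ε : Fin N → ℤ} (hε : IsSignVector ε) {a x : Fin N → ℤ}
    {Y : Finset (Fin N)} {t : ℤ} :
    x ∈ signedOrthant (apexShift a Y ε t) Y ε ↔
      (∀ i ∈ Y, t ≤ ε i * (x i - a i)) ∧ ∀ i ∉ Y, x i = a i := by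
  refine and_congr (forall₂_congr fun i hi => ?_) (forall₂_congr fun i hi => ?_)
  · have : ε i * (x i - apexShift a Y ε t i) = ε i * (x i - a i) - t := by
      rw [apexShift, if_pos hi, mul_sub, mul_add, ← mul_assoc, hε.mul_self, one_mul, mul_sub]
      ring
    rw [this, sub_nonneg]
  · rw [apexShift, if_neg hi]

lemma signedOrthant_apexShift_subset {ε : Fin N → ℤ} (hε : IsSignVector ε) {a c : Fin N → ℤ}
    {Y : Finset (Fin N)} {t : ℤ} (ht : ∀ i ∈ Y, ε i * (c i - a i) ≤ t)
    (hoff : ∀ i ∉ Y, a i = c i) :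
    signedOrthant (apexShift a Y ε t) Y ε ⊆ signedOrthant c Y ε := by
  intro x hx
  rw [mem_signedOrthant_apexShift hε] at hx
  refine ⟨fun i hi => ?_, fun i hi => (hx.2 i hi).trans (hoff i hi)⟩
  have hsplit : ε i * (x i - c i) = ε i * (x i - a i) - ε i * (c i - a i) := by ring
  linarith [hx.1 i hi, ht i hi]

lemma signedOrthant_apexShift_subset_self {ε : Fin N → ℤ} (hε : IsSignVector ε)
    (a : Fin N → ℤ) (Y : Finset (Fin N)) {t : ℤ} (ht : 0 ≤ t) :
    signedOrthant (apexShift a Y ε t) Y ε ⊆ signedOrthant a Y ε :=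
  signedOrthant_apexShift_subset hε (fun i _ => by simpa using ht) fun _ _ => rfl

lemma subset_and_eqOn_of_signedOrthant_subset {ε δ : Fin N → ℤ} (hε : IsSignVector ε)
    (hδ : IsSignVector δ) {a b : Fin N → ℤ} {Y Z : Finset (Fin N)}
    (h : signedOrthant b Z δ ⊆ signedOrthant a Y ε) : Z ⊆ Y ∧ ∀ i ∈ Z, δ i = ε i := by
  have hray : ∀ t, 0 ≤ t → apexShift b Z δ t ∈ signedOrthant a Y ε := fun t ht =>
    h (signedOrthant_apexShift_subset_self hδ b Z ht (self_mem_signedOrthant _ _ _))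
  have hZY : Z ⊆ Y := by
    intro i hi
    by_contra hiY
    have h0 := (hray 0 le_rfl).2 i hiY
    have h1 := (hray 1 zero_le_one).2 i hiY
    simp only [apexShift, if_pos hi] at h0 h1
    rcases hδ i with hδi | hδi <;> omega
  refine ⟨hZY, fun i hi => ?_⟩
  set t := max 0 (ε i * (b i - a i) + 1)
  have ht : ε i * (b i - a i) + 1 ≤ t := le_max_right _ _
  have hfar := (hray t (le_max_left _ _)).1 i (hZY hi)
  simp only [apexShift, if_pos hi] at hfar
  rcases hε i with hεi | hεi <;> rcases hδ i with hδi | hδi <;>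
    simp only [hεi, hδi] at hfar ht ⊢ <;> omega

lemma exists_signedOrthant_subset_inter {ε : Fin N → ℤ} (hε : IsSignVector ε)
    {b c : Fin N → ℤ} {Y : Finset (Fin N)} (hbc : ∀ i ∉ Y, b i = c i) :
    ∃ d, signedOrthant d Y ε ⊆ signedOrthant b Y ε ∩ signedOrthant c Y ε := by
  obtain ⟨t, ht0, ht⟩ := exists_nonneg_forall_lt fun i => ε i * (c i - b i)
  exact ⟨apexShift b Y ε t, Set.subset_inter (signedOrthant_apexShift_subset_self hε b Y ht0)
    (signedOrthant_apexShift_subset hε (fun i _ => (ht i).le) hbc)⟩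

lemma mem_signedOrthant_of_mem_of_forall_pos {ε δ : Fin N → ℤ} (hε : IsSignVector ε)
    (hδ : IsSignVector δ) {b x y : Fin N → ℤ} {Y Z : Finset (Fin N)}
    (hx : ∀ i ∈ Y, 0 < ε i * (x i - b i)) (hy : ∀ i ∈ Y, 0 < ε i * (y i - b i))
    (hxy : ∀ i ∉ Y, x i = y i) (hxP : x ∈ signedOrthant b Z δ) : y ∈ signedOrthant b Z δ := by
  refine ⟨fun i hiZ => ?_, fun i hiZ => ?_⟩
  · by_cases hiY : i ∈ Y
    · have hx' := hx i hiY
      have hy' := hy i hiY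
      have hxZ := hxP.1 i hiZ
      rcases hε i with h | h <;> rcases hδ i with h' | h' <;> rw [h] at hx' hy' <;>
        rw [h'] at hxZ ⊢ <;> linarith
    · exact hxy i hiY ▸ hxP.1 i hiZ
  · by_cases hiY : i ∈ Y
    · have hx' := hx i hiY
      rw [hxP.2 i hiZ, sub_self, mul_zero] at hx'
      exact absurd hx' (lt_irrefl 0)
    · exact (hxy i hiY).symm.trans (hxP.2 i hiZ)

lemma exists_signedOrthant_subset_or_disjoint {ε δ : Fin N → ℤ} (hε : IsSignVector ε)
    (hδ : IsSignVector δ) (a : Fin N → ℤ) (Y : Finset (Fin N)) (b : Fin N → ℤ)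
    (Z : Finset (Fin N)) :
    ∃ d, signedOrthant d Y ε ⊆ signedOrthant a Y ε ∧
      (signedOrthant d Y ε ⊆ signedOrthant b Z δ ∨
        Disjoint (signedOrthant d Y ε) (signedOrthant b Z δ)) := by
  obtain ⟨t, ht0, ht⟩ := exists_nonneg_forall_lt fun i => ε i * (b i - a i)
  set L := signedOrthant (apexShift a Y ε t) Y ε
  have hpos : ∀ x ∈ L, ∀ i ∈ Y, 0 < ε i * (x i - b i) := by
    intro x hx i hi
    have hsplit : ε i * (x i - b i) = ε i * (x i - a i) - ε i * (b i - a i) := by ring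
    linarith [((mem_signedOrthant_apexShift hε).1 hx).1 i hi, ht i]
  have hoff : ∀ x ∈ L, ∀ i ∉ Y, x i = a i := fun x hx => ((mem_signedOrthant_apexShift hε).1 hx).2
  refine ⟨apexShift a Y ε t, signedOrthant_apexShift_subset_self hε a Y ht0, ?_⟩
  by_cases hmeet : ∃ x ∈ L, x ∈ signedOrthant b Z δ
  · obtain ⟨x, hx, hxP⟩ := hmeet
    exact Or.inl fun y hy => mem_signedOrthant_of_mem_of_forall_pos hε hδ (hpos x hx) (hpos y hy)
      (fun i hi => (hoff x hx i hi).trans (hoff y hy i hi).symm) hxP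
  · push Not at hmeet
    exact Or.inr (Set.disjoint_left.2 hmeet)

lemma exists_signedOrthant_subset_inter_of_subset_sUnion {ε : Fin N → ℤ} (hε : IsSignVector ε)
    {Y : Finset (Fin N)} {𝓟 : Set (Set (Fin N → ℤ))} (h𝓟 : 𝓟.Finite)
    (horth : ∀ P ∈ 𝓟, IsOrthant P) {a : Fin N → ℤ} (hsub : signedOrthant a Y ε ⊆ ⋃₀ 𝓟) :
    ∃ P ∈ 𝓟, ∃ d, signedOrthant d Y ε ⊆ signedOrthant a Y ε ∩ P := by
  induction 𝓟, h𝓟 using Set.Finite.induction_on generalizing a with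
  | empty => simpa using hsub (self_mem_signedOrthant a Y ε)
  | @insert P₀ 𝓟 _ _ ih =>
    obtain ⟨k, hP₀⟩ := horth P₀ (Set.mem_insert _ _)
    obtain ⟨b, Z, δ, hδ, -, rfl⟩ := isOrthantOfRank_iff.1 hP₀
    obtain ⟨d, hda, hdP | hdP⟩ := exists_signedOrthant_subset_or_disjoint hε hδ a Y b Z
    · exact ⟨_, Set.mem_insert _ _, d, Set.subset_inter hda hdP⟩
    · have hd𝓟 : signedOrthant d Y ε ⊆ ⋃₀ 𝓟 := fun x hx => by
        have := hsub (hda hx)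
        rw [Set.sUnion_insert] at this
        exact this.resolve_left (Set.disjoint_left.1 hdP hx)
      obtain ⟨P, hP, d', hd'⟩ := ih (fun P hP => horth P (Set.mem_insert_of_mem _ hP)) hd𝓟
      exact ⟨P, Set.mem_insert_of_mem _ hP, d', hd'.trans (Set.inter_subset_inter_left _ hda)⟩

lemma IsOrthantOfRank.nonempty {L : Set (Fin N → ℤ)} {k : ℕ} (hL : IsOrthantOfRank L k) :
    L.Nonempty := by
  obtain ⟨a, Y, ε, -, -, rfl⟩ := isOrthantOfRank_iff.1 hL
  exact ⟨a, self_mem_signedOrthant a Y ε⟩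

lemma IsOrthantOfRank.le_dim {L : Set (Fin N → ℤ)} {k : ℕ} (hL : IsOrthantOfRank L k) :
    k ≤ N := by
  obtain ⟨-, -, Y, -, rfl, -⟩ := hL
  simpa using Y.card_le_univ

lemma IsOrthantOfRank.le_of_subset {L M : Set (Fin N → ℤ)} {j k : ℕ}
    (hM : IsOrthantOfRank M j) (hL : IsOrthantOfRank L k) (h : M ⊆ L) : j ≤ k := by
  obtain ⟨a, Y, ε, hε, rfl, rfl⟩ := isOrthantOfRank_iff.1 hL
  obtain ⟨b, Z, δ, hδ, rfl, rfl⟩ := isOrthantOfRank_iff.1 hM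
  exact Finset.card_le_card (subset_and_eqOn_of_signedOrthant_subset hε hδ h).1

lemma IsOrthantOfRank.exists_subset_inter {L M₁ M₂ : Set (Fin N → ℤ)} {n : ℕ}
    (hL : IsOrthantOfRank L n) (hM₁ : IsOrthantOfRank M₁ n) (hM₂ : IsOrthantOfRank M₂ n)
    (h₁ : M₁ ⊆ L) (h₂ : M₂ ⊆ L) : ∃ V, IsOrthantOfRank V n ∧ V ⊆ M₁ ∩ M₂ := by
  obtain ⟨a, Y, ε, hε, hY, rfl⟩ := isOrthantOfRank_iff.1 hL
  have hnormal : ∀ {M}, IsOrthantOfRank M n → M ⊆ signedOrthant a Y ε →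
      ∃ b, b ∈ signedOrthant a Y ε ∧ M = signedOrthant b Y ε := by
    intro M hM hML
    obtain ⟨b, Z, δ, hδ, hZ, rfl⟩ := isOrthantOfRank_iff.1 hM
    obtain ⟨hZY, hδε⟩ := subset_and_eqOn_of_signedOrthant_subset hε hδ hML
    obtain rfl : Z = Y := Finset.eq_of_subset_of_card_le hZY (by omega)
    refine ⟨b, hML (self_mem_signedOrthant b Z δ), ?_⟩
    ext x
    exact and_congr_left' (forall₂_congr fun i hi => by rw [hδε i hi])
  obtain ⟨b, hb, rfl⟩ := hnormal hM₁ h₁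
  obtain ⟨c, hc, rfl⟩ := hnormal hM₂ h₂
  obtain ⟨d, hd⟩ := exists_signedOrthant_subset_inter hε fun i hi => (hb.2 i hi).trans (hc.2 i hi).symm
  exact ⟨_, isOrthantOfRank_iff.2 ⟨d, Y, ε, hε, hY, rfl⟩, hd⟩

lemma IsOrthantOfRank.exists_subset_inter_of_subset_sUnion {L : Set (Fin N → ℤ)} {k : ℕ}
    (hL : IsOrthantOfRank L k) {𝓟 : Set (Set (Fin N → ℤ))} (h𝓟 : 𝓟.Finite)
    (horth : ∀ P ∈ 𝓟, IsOrthant P) (hsub : L ⊆ ⋃₀ 𝓟) :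
    ∃ P ∈ 𝓟, ∃ R, IsOrthantOfRank R k ∧ R ⊆ L ∩ P := by
  obtain ⟨a, Y, ε, hε, hY, rfl⟩ := isOrthantOfRank_iff.1 hL
  obtain ⟨P, hP, d, hd⟩ := exists_signedOrthant_subset_inter_of_subset_sUnion hε h𝓟 horth hsub
  exact ⟨P, hP, _, isOrthantOfRank_iff.2 ⟨d, Y, ε, hε, hY, rfl⟩, hd⟩

lemma bddAbove_orthantRanks (S : Set (Fin N → ℤ)) :
    BddAbove {k | ∃ L, IsOrthantOfRank L k ∧ L ⊆ S} :=
  ⟨N, fun _ ⟨_, hL, _⟩ => hL.le_dim⟩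

lemma le_orthRank {S L : Set (Fin N → ℤ)} {k : ℕ} (hL : IsOrthantOfRank L k) (h : L ⊆ S) :
    k ≤ orthRank S :=
  le_csSup (bddAbove_orthantRanks S) ⟨L, hL, h⟩

lemma orthRank_le {S : Set (Fin N → ℤ)} {m : ℕ}
    (h : ∀ k L, IsOrthantOfRank L k → L ⊆ S → k ≤ m) : orthRank S ≤ m :=
  csSup_le' fun k ⟨L, hL, hLS⟩ => h k L hL hLS

lemma orthRank_mono {S T : Set (Fin N → ℤ)} (h : S ⊆ T) : orthRank S ≤ orthRank T :=
  orthRank_le fun _ _ hL hLS => le_orthRank hL (hLS.trans h)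

lemma IsOrthantOfRank.orthRank_eq {L : Set (Fin N → ℤ)} {n : ℕ} (hL : IsOrthantOfRank L n) :
    orthRank L = n :=
  le_antisymm (orthRank_le fun _ _ hM hML => hM.le_of_subset hL hML) (le_orthRank hL le_rfl)

lemma exists_isOrthantOfRank_orthRank {T : Set (Fin N → ℤ)} (hT : T.Nonempty) :
    ∃ L, IsOrthantOfRank L (orthRank T) ∧ L ⊆ T := by
  obtain ⟨x, hx⟩ := hT
  have hpt : IsOrthantOfRank (signedOrthant x ∅ 1) 0 :=
    isOrthantOfRank_iff.2 ⟨x, ∅, 1, fun _ => Or.inl rfl, rfl, rfl⟩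
  have hpt_sub : signedOrthant x ∅ 1 ⊆ T := fun y hy =>
    (funext fun i => hy.2 i (Finset.notMem_empty i) : y = x) ▸ hx
  exact Nat.sSup_mem (s := {k | ∃ L, IsOrthantOfRank L k ∧ L ⊆ T}) ⟨0, _, hpt, hpt_sub⟩
    (bddAbove_orthantRanks T)

lemma commensurable_iff {L M : Set (Fin N → ℤ)} {n : ℕ} (hL : IsOrthantOfRank L n)
    (hM : IsOrthantOfRank M n) :
    Commensurable L M ↔ ∃ V, IsOrthantOfRank V n ∧ V ⊆ L ∩ M := by
  constructor
  · rintro ⟨hne, hLrank, -⟩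
    obtain ⟨V, hV, hVsub⟩ := exists_isOrthantOfRank_orthRank hne
    rw [← hLrank, hL.orthRank_eq] at hV
    exact ⟨V, hV, hVsub⟩
  · rintro ⟨V, hV, hVsub⟩
    have hrank : orthRank (L ∩ M) = n :=
      le_antisymm (orthRank_le fun _ _ hP hPsub => hP.le_of_subset hL
        (hPsub.trans Set.inter_subset_left)) (le_orthRank hV hVsub)
    exact ⟨hV.nonempty.mono hVsub, by rw [hL.orthRank_eq, hrank], by rw [hM.orthRank_eq, hrank]⟩

lemma Commensurable.symm {L M : Set (Fin N → ℤ)} (h : Commensurable L M) : Commensurable M L := by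
  obtain ⟨h₁, h₂, h₃⟩ := h
  rw [Set.inter_comm] at h₁ h₂ h₃
  exact ⟨h₁, h₃, h₂⟩

lemma commensurable_of_subset {L M : Set (Fin N → ℤ)} {n : ℕ} (hL : IsOrthantOfRank L n)
    (hM : IsOrthantOfRank M n) (h : M ⊆ L) : Commensurable L M :=
  (commensurable_iff hL hM).2 ⟨M, hM, Set.subset_inter h le_rfl⟩

lemma Commensurable.trans {L M K : Set (Fin N → ℤ)} {n : ℕ} (hL : IsOrthantOfRank L n)
    (hM : IsOrthantOfRank M n) (hK : IsOrthantOfRank K n) (hLM : Commensurable L M)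
    (hMK : Commensurable M K) : Commensurable L K := by
  obtain ⟨V₁, hV₁, hV₁sub⟩ := (commensurable_iff hL hM).1 hLM
  obtain ⟨V₂, hV₂, hV₂sub⟩ := (commensurable_iff hM hK).1 hMK
  obtain ⟨V, hV, hVsub⟩ := hM.exists_subset_inter hV₁ hV₂ (hV₁sub.trans Set.inter_subset_right)
    (hV₂sub.trans Set.inter_subset_left)
  refine (commensurable_iff hL hK).2 ⟨V, hV, Set.subset_inter ?_ ?_⟩
  · exact hVsub.trans (Set.inter_subset_left.trans (hV₁sub.trans Set.inter_subset_left))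
  · exact hVsub.trans (Set.inter_subset_right.trans (hV₂sub.trans Set.inter_subset_right))

lemma commensurable_equivalence (S : Set (Fin N → ℤ)) (n : ℕ) :
    Equivalence fun L M : germSet S n => Commensurable L.1 M.1 :=
  ⟨fun L => commensurable_of_subset L.2.1 L.2.1 le_rfl, Commensurable.symm,
    fun {L M K} => Commensurable.trans L.2.1 M.2.1 K.2.1⟩

lemma germOf_eq_germOf_iff {S : Set (Fin N → ℤ)} {n : ℕ} {L M : germSet S n} :
    germOf S n L = germOf S n M ↔ Commensurable L.1 M.1 :=
  (commensurable_equivalence S n).quot_mk_eq_iff L M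

lemma IsOrthohedral.exists_subset_of_subset_union {S S' L : Set (Fin N → ℤ)} {k : ℕ}
    (hS : IsOrthohedral S) (hS' : IsOrthohedral S') (hL : IsOrthantOfRank L k)
    (hsub : L ⊆ S ∪ S') : ∃ R, IsOrthantOfRank R k ∧ R ⊆ L ∧ (R ⊆ S ∨ R ⊆ S') := by
  obtain ⟨𝓛, h𝓛, h𝓛orth, rfl⟩ := hS
  obtain ⟨𝓜, h𝓜, h𝓜orth, rfl⟩ := hS'
  rw [← Set.sUnion_union] at hsub
  obtain ⟨P, hP, R, hR, hRsub⟩ := hL.exists_subset_inter_of_subset_sUnion (h𝓛.union h𝓜)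
    (fun P hP => hP.elim (h𝓛orth P) (h𝓜orth P)) hsub
  refine ⟨R, hR, hRsub.trans Set.inter_subset_left, hP.imp ?_ ?_⟩ <;>
    exact fun hP => (hRsub.trans Set.inter_subset_right).trans (Set.subset_sUnion_of_mem hP)

lemma IsOrthohedral.orthRank_union {S S' : Set (Fin N → ℤ)} (hS : IsOrthohedral S)
    (hS' : IsOrthohedral S') : orthRank (S ∪ S') = max (orthRank S) (orthRank S') := by
  refine le_antisymm (orthRank_le fun k L hL hsub => ?_)
    (max_le (orthRank_mono Set.subset_union_left) (orthRank_mono Set.subset_union_right))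
  obtain ⟨R, hR, -, hRS | hRS'⟩ := hS.exists_subset_of_subset_union hS' hL hsub
  · exact le_max_of_le_left (le_orthRank hR hRS)
  · exact le_max_of_le_right (le_orthRank hR hRS')

lemma IsOrthohedral.finite_germ {S : Set (Fin N → ℤ)} (hS : IsOrthohedral S) :
    Finite (Germ S (orthRank S)) := by
  obtain ⟨𝓛, h𝓛, horth, rfl⟩ := hS
  set n := orthRank (⋃₀ 𝓛)
  have : Finite ↥(𝓛 ∩ germSet (⋃₀ 𝓛) n) := (h𝓛.subset Set.inter_subset_left).to_subtype
  refine Finite.of_surjective (fun P : ↥(𝓛 ∩ germSet (⋃₀ 𝓛) n) => germOf _ n ⟨P.1, P.2.2⟩) ?_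
  intro p
  induction p using Quot.ind with
  | mk L =>
    obtain ⟨P, hP, R, hR, hRsub⟩ := L.2.1.exists_subset_inter_of_subset_sUnion h𝓛 horth L.2.2
    obtain ⟨kP, hkP⟩ := horth P hP
    obtain rfl : kP = n := le_antisymm (le_orthRank hkP (Set.subset_sUnion_of_mem hP))
      (hR.le_of_subset hkP (hRsub.trans Set.inter_subset_right))
    refine ⟨⟨P, hP, hkP, Set.subset_sUnion_of_mem hP⟩, germOf_eq_germOf_iff.2 ?_⟩
    exact (commensurable_iff hkP L.2.1).2 ⟨R, hR, Set.subset_inter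
      (hRsub.trans Set.inter_subset_right) (hRsub.trans Set.inter_subset_left)⟩

def Germ.inclusion {S T : Set (Fin N → ℤ)} {k : ℕ} (h : S ⊆ T) : Germ S k → Germ T k :=
  Quot.map (fun L => ⟨L.1, L.2.1, L.2.2.trans h⟩) fun _ _ hLM => hLM

lemma Germ.inclusion_injective {S T : Set (Fin N → ℤ)} {k : ℕ} (h : S ⊆ T) :
    Function.Injective (Germ.inclusion (k := k) h) := by
  intro p q
  induction p using Quot.ind
  induction q using Quot.ind
  exact fun hpq => germOf_eq_germOf_iff.2 ((germOf_eq_germOf_iff (S := T)).1 hpq)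

lemma Germ.inclusion_union_left_ne_right {S S' : Set (Fin N → ℤ)} {k : ℕ}
    (hk : orthRank (S ∩ S') < k) (p : Germ S k) (q : Germ S' k) :
    Germ.inclusion Set.subset_union_left p ≠ Germ.inclusion Set.subset_union_right q := by
  induction p using Quot.ind with | mk L => ?_
  induction q using Quot.ind with | mk M => ?_
  intro hLM
  obtain ⟨V, hV, hVsub⟩ := (commensurable_iff L.2.1 M.2.1).1 (germOf_eq_germOf_iff.1 hLM)
  exact hk.not_ge (le_orthRank hV (hVsub.trans (Set.inter_subset_inter L.2.2 M.2.2)))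

lemma IsOrthohedral.germ_union_bijective {S S' : Set (Fin N → ℤ)} {k : ℕ}
    (hS : IsOrthohedral S) (hS' : IsOrthohedral S') (hk : orthRank (S ∩ S') < k) :
    Function.Bijective (Sum.elim (Germ.inclusion (k := k) (Set.subset_union_left (t := S')))
      (Germ.inclusion (Set.subset_union_right (s := S)))) := by
  refine ⟨(Germ.inclusion_injective _).sumElim (Germ.inclusion_injective _)
    (Germ.inclusion_union_left_ne_right hk), fun p => ?_⟩
  induction p using Quot.ind with
  | mk L =>
    obtain ⟨R, hR, hRL, hRS | hRS'⟩ := hS.exists_subset_of_subset_union hS' L.2.1 L.2.2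
    · exact ⟨Sum.inl (germOf S k ⟨R, hR, hRS⟩),
        germOf_eq_germOf_iff.2 (commensurable_of_subset L.2.1 hR hRL).symm⟩
    · exact ⟨Sum.inr (germOf S' k ⟨R, hR, hRS'⟩),
        germOf_eq_germOf_iff.2 (commensurable_of_subset L.2.1 hR hRL).symm⟩

lemma IsOrthohedral.heightAt_union {S S' : Set (Fin N → ℤ)} {k : ℕ} (hS : IsOrthohedral S)
    (hS' : IsOrthohedral S') (hk : orthRank (S ∩ S') < k) [Finite (Germ S k)]
    [Finite (Germ S' k)] : heightAt (S ∪ S') k = heightAt S k + heightAt S' k := by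
  rw [heightAt, ← Nat.card_eq_of_bijective _ (hS.germ_union_bijective hS' hk), Nat.card_sum]
  rfl

end

/-- If `rk S = rk S' > rk (S ∩ S')` then `h(S ∪ S') = h(S) + h(S')`. -/
theorem stmt3 {N : ℕ} (S S' : Set (Fin N → ℤ)) (hS : IsOrthohedral S)
    (hS' : IsOrthohedral S') (h1 : orthRank S = orthRank S')
    (h2 : orthRank (S ∩ S') < orthRank S) :
    height (S ∪ S') = height S + height S' := by
  have hrank : orthRank (S ∪ S') = orthRank S := by
    rw [hS.orthRank_union hS', ← h1, max_self]
  have := hS.finite_germ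
  have : Finite (Germ S' (orthRank S)) := h1 ▸ hS'.finite_germ
  rw [height, height, height, hrank, hS.heightAt_union hS' h2, h1]

end PeiPaper
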